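/- arXiv:1804.07221 — 2 statements merged into one kernel-verified Lean document; each statement's English description precedes it below -/
import Mathlib

section
/- For any attractor A of the transition system of a Boolean network, the greatest fixed point of the operator F(T) = T \ (pre(post(T) \ T) ∩ T) starting from the weak basin of A equals the strong basin of A; that is, F^∞(basW(A)) = basS(A). -/
/-!
`F(T)` removes from `T` exactly the states with a successor outside `T`. Hence every trap set
(a set closed under transitions) contained in `T` survives all iterations, and the intersection
of the iterates is itself a trap set: a successor leaving the `k`-th iterate would remove its
source from the next one. The strong basin of `A` is a trap set inside the weak basin, since
every state lies in some weak basin, which gives one inclusion. Conversely, every state reachable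
from the intersection stays in `basW(A)`, so an attractor `B` reachable from it has a state
reaching `A`; as `B` is closed under reachability, `B = A`.
-/

/-- Reachability: reflexive-transitive closure of the transition relation. -/
def reach {σ : Type*} (r : σ → σ → Prop) : σ → σ → Prop := Relation.ReflTransGen r

/-- An attractor: a set `A` with `reach(s) = A` for every `s ∈ A`. -/
def IsAttractor {σ : Type*} (r : σ → σ → Prop) (A : Set σ) : Prop :=
  ∀ s ∈ A, {t | reach r s t} = A

/-- Weak basin of attraction. -/
def basW {σ : Type*} (r : σ → σ → Prop) (A : Set σ) : Set σ :=
  {s | ∃ t ∈ A, reach r s t}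

/-- Strong basin of attraction. -/
def basS {σ : Type*} (r : σ → σ → Prop) (A : Set σ) : Set σ :=
  basW r A \ ⋃ A' ∈ {B : Set σ | IsAttractor r B ∧ B ≠ A}, basW r A'

/-- One-step predecessors of a set of states. -/
def pre {σ : Type*} (r : σ → σ → Prop) (T : Set σ) : Set σ := {s | ∃ t ∈ T, r s t}

/-- One-step successors of a set of states. -/
def post {σ : Type*} (r : σ → σ → Prop) (T : Set σ) : Set σ := {t | ∃ s ∈ T, r s t}

/-- The operator `F(T) = T \ (pre(post(T) \ T) ∩ T)`. -/
def Fop {σ : Type*} (r : σ → σ → Prop) (T : Set σ) : Set σ :=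
  T \ (pre r (post r T \ T) ∩ T)

def IsTrap {σ : Type*} (r : σ → σ → Prop) (S : Set σ) : Prop :=
  ∀ ⦃s t⦄, s ∈ S → r s t → t ∈ S

section

variable {σ : Type*} {r : σ → σ → Prop}

theorem IsTrap.mem_of_reach {S : Set σ} (hS : IsTrap r S) {s t : σ} (hs : s ∈ S)
    (hst : reach r s t) : t ∈ S := by
  induction hst with
  | refl => exact hs
  | tail _ h ih => exact hS ih h

theorem mem_Fop_iff {T : Set σ} {s : σ} : s ∈ Fop r T ↔ s ∈ T ∧ ∀ t, r s t → t ∈ T := by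
  constructor
  · rintro ⟨hs, hout⟩
    refine ⟨hs, fun t hst => ?_⟩
    by_contra ht
    exact hout ⟨⟨t, ⟨⟨s, hs, hst⟩, ht⟩, hst⟩, hs⟩
  · rintro ⟨hs, hsucc⟩
    exact ⟨hs, fun ⟨⟨t, ⟨_, ht⟩, hst⟩, _⟩ => ht (hsucc t hst)⟩

theorem IsTrap.subset_Fop {S T : Set σ} (hS : IsTrap r S) (hST : S ⊆ T) : S ⊆ Fop r T :=
  fun _ hs => mem_Fop_iff.2 ⟨hST hs, fun _ hst => hST (hS hs hst)⟩

theorem IsTrap.subset_iterate_Fop {S T : Set σ} (hS : IsTrap r S) (hST : S ⊆ T) (k : ℕ) :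
    S ⊆ (Fop r)^[k] T := by
  induction k with
  | zero => exact hST
  | succ k ih =>
    rw [Function.iterate_succ_apply']
    exact hS.subset_Fop ih

theorem isTrap_iInter_iterate_Fop (T : Set σ) : IsTrap r (⋂ k : ℕ, (Fop r)^[k] T) := by
  intro s t hs hst
  refine Set.mem_iInter.2 fun k => ?_
  have hs' := Set.mem_iInter.1 hs (k + 1)
  rw [Function.iterate_succ_apply'] at hs'
  exact (mem_Fop_iff.1 hs').2 t hst

theorem mem_basS_iff {A : Set σ} {s : σ} :
    s ∈ basS r A ↔ s ∈ basW r A ∧ ∀ B, IsAttractor r B → B ≠ A → s ∉ basW r B := by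
  simp only [basS, Set.mem_sdiff, Set.mem_iUnion, Set.mem_ofPred_eq, exists_prop, not_exists,
    not_and, and_imp]

theorem mem_basW_of_rel {A : Set σ} {s t : σ} (hst : r s t) (ht : t ∈ basW r A) :
    s ∈ basW r A := by
  obtain ⟨a, ha, hta⟩ := ht
  exact ⟨a, ha, Relation.ReflTransGen.head hst hta⟩

theorem IsAttractor.eq_of_mem_basW {A B : Set σ} (hA : IsAttractor r A) (hB : IsAttractor r B)
    {b : σ} (hb : b ∈ B) (hbA : b ∈ basW r A) : B = A := by
  obtain ⟨a, ha, hba⟩ := hbA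
  have haB : a ∈ B := hB b hb ▸ hba
  rw [← hB a haB, hA a ha]

theorem isTrap_basS (hall : ∀ s : σ, ∃ A : Set σ, IsAttractor r A ∧ s ∈ basW r A)
    (A : Set σ) : IsTrap r (basS r A) := by
  intro s t hs hst
  obtain ⟨-, hsB⟩ := mem_basS_iff.1 hs
  have htB : ∀ B, IsAttractor r B → B ≠ A → t ∉ basW r B :=
    fun B hB hne ht => hsB B hB hne (mem_basW_of_rel hst ht)
  obtain ⟨A', hA', htA'⟩ := hall t
  obtain rfl : A' = A := by_contra fun hne => htB A' hA' hne htA'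
  exact mem_basS_iff.2 ⟨htA', htB⟩

end

theorem stmt5_general {σ : Type*} (r : σ → σ → Prop)
    (hall : ∀ s : σ, ∃ A : Set σ, IsAttractor r A ∧ s ∈ basW r A)
    (A : Set σ) (hA : IsAttractor r A) :
    (⋂ k : ℕ, (Fop r)^[k] (basW r A)) = basS r A := by
  have hsub : (⋂ k : ℕ, (Fop r)^[k] (basW r A)) ⊆ basW r A := Set.iInter_subset _ 0
  apply subset_antisymm
  · intro x hx
    refine mem_basS_iff.2 ⟨hsub hx, fun B hB hne ⟨b, hb, hxb⟩ => hne ?_⟩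
    exact hA.eq_of_mem_basW hB hb (hsub ((isTrap_iInter_iterate_Fop _).mem_of_reach hx hxb))
  · exact Set.subset_iInter fun k => (isTrap_basS hall A).subset_iterate_Fop (fun _ hs => hs.1) k

/-- For any attractor `A`, the greatest fixed point of `F` starting from the weak basin of `A`
equals the strong basin of `A`: `F^∞(basW(A)) = basS(A)`. -/
theorem stmt5 {σ : Type*} [Fintype σ] (r : σ → σ → Prop)
    (hall : ∀ s : σ, ∃ A : Set σ, IsAttractor r A ∧ s ∈ basW r A)
    (A : Set σ) (hA : IsAttractor r A) :
    (⋂ k : ℕ, (Fop r)^[k] (basW r A)) = basS r A :=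
  stmt5_general r hall A hA
end

section
/- If B1 and B2 are disjoint elementary blocks covering all nodes, and A = A1 ⊗ A2 is an attractor of the global transition system with A1, A2 attractors of the block transition systems, then the strong basin of A in the global system equals the cross of the strong basins: basS(A) = basS(A1) ⊗ basS(A2). -/
variable {V : Type*} [Fintype V] [DecidableEq V]

/-- Asynchronous (global) transition relation of a Boolean network on node set `V`. -/
def gstep (f : (V → Bool) → V → Bool) (s s' : V → Bool) : Prop :=
  ∃ v, s' = Function.update s v (f s v)

/-- A block `B` is elementary if the update function of every node of `B`
depends only on the nodes in `B`. -/
def Elem (f : (V → Bool) → V → Bool) (B : Set V) : Prop :=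
  ∀ v ∈ B, ∀ s t : V → Bool, (∀ u ∈ B, s u = t u) → f s v = f t v

/-- Projection of a global state to a block. -/
def proj (B : Set V) (s : V → Bool) : {v // v ∈ B} → Bool := fun v => s v.1

/-- Local (asynchronous) transition relation of a block `B`: a node of `B` is updated,
using any global state extending the local one (for elementary `B` this is well defined). -/
def lstep (f : (V → Bool) → V → Bool) (B : Set V)
    (x x' : {v // v ∈ B} → Bool) : Prop :=
  ∃ v : {v // v ∈ B}, ∃ s : V → Bool, proj B s = x ∧ x' = Function.update x v (f s v.1)

-- helpers

lemma mem_basS {σ : Type*} {r : σ → σ → Prop} {A : Set σ} {s : σ} :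
    s ∈ basS r A ↔ s ∈ basW r A ∧ ∀ A', IsAttractor r A' → A' ≠ A → s ∉ basW r A' := by
  simp only [basS, Set.mem_diff, Set.mem_iUnion, Set.mem_setOf_eq, not_exists]
  constructor
  · rintro ⟨h1, h2⟩
    exact ⟨h1, fun A' hA' hne => h2 A' ⟨hA', hne⟩⟩
  · rintro ⟨h1, h2⟩
    exact ⟨h1, fun A' ⟨hA', hne⟩ => h2 A' hA' hne⟩

lemma attr_eq_of_mem {σ : Type*} {r : σ → σ → Prop} {A A' : Set σ}
    (hA : IsAttractor r A) (hA' : IsAttractor r A') {t : σ} (ht : t ∈ A) (ht' : t ∈ A') :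
    A = A' := by rw [← hA t ht, ← hA' t ht']

lemma exists_reach_attractor {σ : Type*} [Finite σ] (r : σ → σ → Prop) (x : σ) :
    ∃ A : Set σ, IsAttractor r A ∧ ∃ y ∈ A, reach r x y := by
  have hwf : WellFoundedLT (Set σ) := Finite.to_wellFoundedLT
  obtain ⟨T, ⟨y, hxy, hT⟩, hmin⟩ := hwf.wf.has_min
    {T : Set σ | ∃ y, reach r x y ∧ T = {u | reach r y u}}
    ⟨{u | reach r x u}, x, Relation.ReflTransGen.refl, rfl⟩
  refine ⟨T, ?_, y, ?_, hxy⟩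
  · intro z hz
    subst hT
    have hsub : {t | reach r z t} ⊆ {u | reach r y u} := fun t ht =>
      Relation.ReflTransGen.trans hz ht
    have hmem : {t | reach r z t} ∈ {T : Set σ | ∃ y, reach r x y ∧ T = {u | reach r y u}} :=
      ⟨z, Relation.ReflTransGen.trans hxy hz, rfl⟩
    by_contra hne
    exact hmin _ hmem (lt_of_le_of_ne hsub hne)
  · subst hT; exact Relation.ReflTransGen.refl

lemma proj_update_mem {B : Set V} {v : V} (hv : v ∈ B) (s : V → Bool) (b : Bool) :
    proj B (Function.update s v b) = Function.update (proj B s) ⟨v, hv⟩ b := by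
  classical
  funext u
  rcases eq_or_ne u.1 v with h | h <;>
    simp [proj, Function.update_apply, Subtype.ext_iff, h]

lemma proj_update_notMem {B : Set V} {v : V} (hv : v ∉ B) (s : V → Bool) (b : Bool) :
    proj B (Function.update s v b) = proj B s := by
  funext u
  simp only [proj, Function.update_apply]
  have : u.1 ≠ v := fun h => hv (h ▸ u.2)
  simp [this]

lemma gstep_cases {f : (V → Bool) → V → Bool} {B1 B2 : Set V}
    (hcov : B1 ∪ B2 = Set.univ) {s s' : V → Bool} (h : gstep f s s') :
    (lstep f B1 (proj B1 s) (proj B1 s') ∧ (∀ v ∉ B1, s' v = s v)) ∨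
    (lstep f B2 (proj B2 s) (proj B2 s') ∧ (∀ v ∉ B2, s' v = s v)) := by
  classical
  obtain ⟨v, rfl⟩ := h
  have hv : v ∈ B1 ∪ B2 := hcov ▸ Set.mem_univ v
  rcases hv with hv | hv
  · left
    refine ⟨⟨⟨v, hv⟩, s, rfl, ?_⟩, fun u hu => ?_⟩
    · rw [proj_update_mem hv]
    · exact Function.update_of_ne (by rintro rfl; exact hu hv) _ _
  · right
    refine ⟨⟨⟨v, hv⟩, s, rfl, ?_⟩, fun u hu => ?_⟩
    · rw [proj_update_mem hv]
    · exact Function.update_of_ne (by rintro rfl; exact hu hv) _ _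

lemma lift_reach {f : (V → Bool) → V → Bool} {B : Set V} (hB : Elem f B)
    {x x' : {v // v ∈ B} → Bool} (h : reach (lstep f B) x x') :
    ∀ s : V → Bool, proj B s = x →
      ∃ s', reach (gstep f) s s' ∧ proj B s' = x' ∧ ∀ v ∉ B, s' v = s v := by
  induction h using Relation.ReflTransGen.head_induction_on with
  | refl => exact fun s hs => ⟨s, Relation.ReflTransGen.refl, hs, fun _ _ => rfl⟩
  | head hstep _ ih =>
    rename_i a c _
    intro s hs
    obtain ⟨v, s0, hs0, hc⟩ := hstep
    have hf : f s v.1 = f s0 v.1 := hB v.1 v.2 s s0 (fun u hu => by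
      have := congrFun (hs.trans hs0.symm) ⟨u, hu⟩
      exact this)
    set s1 := Function.update s v.1 (f s v.1) with hs1
    have hproj : proj B s1 = c := by
      rw [hs1, proj_update_mem v.2, hs, hf, hc]
    obtain ⟨s', h1, h2, h3⟩ := ih s1 hproj
    refine ⟨s', Relation.ReflTransGen.head ⟨v.1, rfl⟩ h1, h2, fun u hu => ?_⟩
    rw [h3 u hu, hs1, Function.update_of_ne (by rintro rfl; exact hu v.2)]

lemma proj_eq_of_agree {B : Set V} {s t : V → Bool} (h : ∀ v ∉ B, s v = t v)
    {C : Set V} (hCB : ∀ v ∈ C, v ∉ B) : proj C s = proj C t := by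
  funext u; exact h u.1 (hCB u.1 u.2)

lemma reach_iff {f : (V → Bool) → V → Bool} {B1 B2 : Set V}
    (hcov : B1 ∪ B2 = Set.univ) (hdisj : Disjoint B1 B2)
    (hB1 : Elem f B1) (hB2 : Elem f B2) {s t : V → Bool} :
    reach (gstep f) s t ↔
      reach (lstep f B1) (proj B1 s) (proj B1 t) ∧
      reach (lstep f B2) (proj B2 s) (proj B2 t) := by
  have h12 : ∀ v ∈ B2, v ∉ B1 := fun v hv2 hv1 => hdisj.ne_of_mem hv1 hv2 rfl
  have h21 : ∀ v ∈ B1, v ∉ B2 := fun v hv1 hv2 => hdisj.ne_of_mem hv1 hv2 rfl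
  constructor
  · intro h
    induction h with
    | refl => exact ⟨Relation.ReflTransGen.refl, Relation.ReflTransGen.refl⟩
    | tail _ hbc ih =>
      rcases gstep_cases hcov hbc with ⟨hl, hfix⟩ | ⟨hl, hfix⟩
      · exact ⟨ih.1.tail hl, (proj_eq_of_agree hfix h12) ▸ ih.2⟩
      · exact ⟨(proj_eq_of_agree hfix h21) ▸ ih.1, ih.2.tail hl⟩
  · rintro ⟨h1, h2⟩
    obtain ⟨s1, hr1, hp1, hf1⟩ := lift_reach hB1 h1 s rfl
    have hp2 : proj B2 s1 = proj B2 s := proj_eq_of_agree hf1 h12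
    obtain ⟨s2, hr2, hp2', hf2⟩ := lift_reach hB2 (hp2 ▸ h2) s1 rfl
    have hst : s2 = t := by
      funext v
      have hv : v ∈ B1 ∪ B2 := hcov ▸ Set.mem_univ v
      rcases hv with hv | hv
      · have : s2 v = s1 v := hf2 v (h21 v hv)
        rw [this]
        exact congrFun hp1 ⟨v, hv⟩
      · exact congrFun hp2' ⟨v, hv⟩
    exact hst ▸ hr1.trans hr2

lemma cross_attractor {f : (V → Bool) → V → Bool} {B1 B2 : Set V}
    (hcov : B1 ∪ B2 = Set.univ) (hdisj : Disjoint B1 B2)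
    (hB1 : Elem f B1) (hB2 : Elem f B2)
    {A1 : Set ({v // v ∈ B1} → Bool)} {A2 : Set ({v // v ∈ B2} → Bool)}
    (hA1 : IsAttractor (lstep f B1) A1) (hA2 : IsAttractor (lstep f B2) A2) :
    IsAttractor (gstep f) {s | proj B1 s ∈ A1 ∧ proj B2 s ∈ A2} := by
  rintro s ⟨hs1, hs2⟩
  ext t
  simp only [Set.mem_setOf_eq]
  rw [reach_iff hcov hdisj hB1 hB2]
  constructor
  · rintro ⟨h1, h2⟩
    exact ⟨(hA1 _ hs1) ▸ h1, (hA2 _ hs2) ▸ h2⟩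
  · rintro ⟨h1, h2⟩
    constructor
    · have := (hA1 _ hs1).symm ▸ h1; exact this
    · have := (hA2 _ hs2).symm ▸ h2; exact this

/-- the set of states reachable from the projection of a state in a global attractor
is a local attractor -/
lemma local_attr {f : (V → Bool) → V → Bool} {B1 B2 : Set V}
    (hcov : B1 ∪ B2 = Set.univ) (hdisj : Disjoint B1 B2)
    (hB1 : Elem f B1) (hB2 : Elem f B2)
    {A' : Set (V → Bool)} (hAttr' : IsAttractor (gstep f) A')
    {t' : V → Bool} (ht' : t' ∈ A') :
    IsAttractor (lstep f B1) {x | reach (lstep f B1) (proj B1 t') x} := by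
  have key : ∀ x, reach (lstep f B1) (proj B1 t') x → reach (lstep f B1) x (proj B1 t') := by
    intro x hx
    obtain ⟨s1, hr1, hp1, _⟩ := lift_reach hB1 hx t' rfl
    have hs1 : s1 ∈ A' := (hAttr' t' ht') ▸ hr1
    have hback : reach (gstep f) s1 t' := by
      have := (hAttr' s1 hs1).symm ▸ ht'
      exact this
    have := (reach_iff hcov hdisj hB1 hB2).1 hback
    exact hp1 ▸ this.1
  intro x hx
  ext u
  simp only [Set.mem_setOf_eq]
  exact ⟨fun h => Relation.ReflTransGen.trans hx h,
    fun h => Relation.ReflTransGen.trans (key x hx) h⟩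

lemma local_attr2 {f : (V → Bool) → V → Bool} {B1 B2 : Set V}
    (hcov : B1 ∪ B2 = Set.univ) (hdisj : Disjoint B1 B2)
    (hB1 : Elem f B1) (hB2 : Elem f B2)
    {A' : Set (V → Bool)} (hAttr' : IsAttractor (gstep f) A')
    {t' : V → Bool} (ht' : t' ∈ A') :
    IsAttractor (lstep f B2) {x | reach (lstep f B2) (proj B2 t') x} := by
  have key : ∀ x, reach (lstep f B2) (proj B2 t') x → reach (lstep f B2) x (proj B2 t') := by
    intro x hx
    obtain ⟨s1, hr1, hp1, _⟩ := lift_reach hB2 hx t' rfl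
    have hs1 : s1 ∈ A' := (hAttr' t' ht') ▸ hr1
    have hback : reach (gstep f) s1 t' := by
      have := (hAttr' s1 hs1).symm ▸ ht'
      exact this
    have := (reach_iff hcov hdisj hB1 hB2).1 hback
    exact hp1 ▸ this.2
  intro x hx
  ext u
  simp only [Set.mem_setOf_eq]
  exact ⟨fun h => Relation.ReflTransGen.trans hx h,
    fun h => Relation.ReflTransGen.trans (key x hx) h⟩


/-- For disjoint elementary blocks `B1, B2` covering all nodes, if `A = A1 ⊗ A2` is an attractor
of the global transition system with `A1, A2` attractors of the block transition systems, then
`basS(A) = basS(A1) ⊗ basS(A2)`. -/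
theorem stmt15 (f : (V → Bool) → V → Bool) (B1 B2 : Set V)
    (hcov : B1 ∪ B2 = Set.univ) (hdisj : Disjoint B1 B2)
    (hB1 : Elem f B1) (hB2 : Elem f B2)
    (A1 : Set ({v // v ∈ B1} → Bool)) (A2 : Set ({v // v ∈ B2} → Bool))
    (A : Set (V → Bool))
    (hA1 : IsAttractor (lstep f B1) A1) (hA2 : IsAttractor (lstep f B2) A2)
    (hA : A = {s | proj B1 s ∈ A1 ∧ proj B2 s ∈ A2})
    (hAttr : IsAttractor (gstep f) A) :
    basS (gstep f) A =
      {s | proj B1 s ∈ basS (lstep f B1) A1 ∧ proj B2 s ∈ basS (lstep f B2) A2} := by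
  classical
  have hmem12 : ∀ v, v ∉ B1 → v ∈ B2 := by
    intro v hv
    rcases (hcov ▸ Set.mem_univ v : v ∈ B1 ∪ B2) with h | h
    · exact absurd h hv
    · exact h
  -- combine two local states into a global one
  let comb : ({v // v ∈ B1} → Bool) → ({v // v ∈ B2} → Bool) → (V → Bool) :=
    fun x y v => if h : v ∈ B1 then x ⟨v, h⟩ else y ⟨v, hmem12 v h⟩
  have hcomb1 : ∀ x y, proj B1 (comb x y) = x := by
    intro x y; funext u; simp only [comb, proj, u.2, dif_pos]
  have hcomb2 : ∀ x y, proj B2 (comb x y) = y := by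
    intro x y; funext u
    have hu : u.1 ∉ B1 := fun h => hdisj.ne_of_mem h u.2 rfl
    simp only [comb, proj, hu, dif_neg, not_false_iff]
  ext s
  simp only [Set.mem_setOf_eq]
  rw [mem_basS, mem_basS, mem_basS]
  constructor
  · rintro ⟨⟨t, htA, hst⟩, hnot⟩
    have hdec := (reach_iff hcov hdisj hB1 hB2).1 hst
    rw [hA] at htA
    have main : ∀ (A1' : Set ({v // v ∈ B1} → Bool)) (A2' : Set ({v // v ∈ B2} → Bool)),
        IsAttractor (lstep f B1) A1' → IsAttractor (lstep f B2) A2' →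
        (∃ x ∈ A1', reach (lstep f B1) (proj B1 s) x) →
        (∃ y ∈ A2', reach (lstep f B2) (proj B2 s) y) →
        A1' = A1 ∧ A2' = A2 := by
      rintro A1' A2' hA1' hA2' ⟨x, hx, hrx⟩ ⟨y, hy, hry⟩
      set C := {u : V → Bool | proj B1 u ∈ A1' ∧ proj B2 u ∈ A2'} with hC
      have hCattr : IsAttractor (gstep f) C :=
        cross_attractor hcov hdisj hB1 hB2 hA1' hA2'
      have hsC : s ∈ basW (gstep f) C := by
        refine ⟨comb x y, ⟨by rw [hcomb1]; exact hx, by rw [hcomb2]; exact hy⟩, ?_⟩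
        rw [reach_iff hcov hdisj hB1 hB2, hcomb1, hcomb2]
        exact ⟨hrx, hry⟩
      have hCA : C = A := by
        by_contra hne
        exact hnot C hCattr hne hsC
      have htC : t ∈ C := by rw [hCA, hA]; exact htA
      exact ⟨(attr_eq_of_mem hA1' hA1 htC.1 htA.1),
        (attr_eq_of_mem hA2' hA2 htC.2 htA.2)⟩
    haveI : Finite {v // v ∈ B1} := Subtype.finite
    haveI : Finite {v // v ∈ B2} := Subtype.finite
    obtain ⟨D1, hD1, z1, hz1, hrz1⟩ := exists_reach_attractor (lstep f B1) (proj B1 s)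
    obtain ⟨D2, hD2, z2, hz2, hrz2⟩ := exists_reach_attractor (lstep f B2) (proj B2 s)
    refine ⟨⟨⟨proj B1 t, htA.1, hdec.1⟩, ?_⟩, ⟨⟨proj B2 t, htA.2, hdec.2⟩, ?_⟩⟩
    · rintro A1' hA1' hne ⟨x, hx, hrx⟩
      exact hne ((main A1' D2 hA1' hD2 ⟨x, hx, hrx⟩ ⟨z2, hz2, hrz2⟩).1)
    · rintro A2' hA2' hne ⟨y, hy, hry⟩
      exact hne ((main D1 A2' hD1 hA2' ⟨z1, hz1, hrz1⟩ ⟨y, hy, hry⟩).2)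
  · rintro ⟨⟨⟨a1, ha1, hr1⟩, hstrong1⟩, ⟨a2, ha2, hr2⟩, hstrong2⟩
    constructor
    · refine ⟨comb a1 a2, ?_, ?_⟩
      · rw [hA]; exact ⟨by rw [hcomb1]; exact ha1, by rw [hcomb2]; exact ha2⟩
      · rw [reach_iff hcov hdisj hB1 hB2, hcomb1, hcomb2]; exact ⟨hr1, hr2⟩
    · rintro A' hA' hne ⟨t', ht', hst'⟩
      have hdec := (reach_iff hcov hdisj hB1 hB2).1 hst'
      have hS1 := local_attr hcov hdisj hB1 hB2 hA' ht'
      have hS2 := local_attr2 hcov hdisj hB1 hB2 hA' ht'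
      have h1w : proj B1 s ∈ basW (lstep f B1) {x | reach (lstep f B1) (proj B1 t') x} :=
        ⟨proj B1 t', Relation.ReflTransGen.refl, hdec.1⟩
      have h2w : proj B2 s ∈ basW (lstep f B2) {x | reach (lstep f B2) (proj B2 t') x} :=
        ⟨proj B2 t', Relation.ReflTransGen.refl, hdec.2⟩
      have hS1A : {x | reach (lstep f B1) (proj B1 t') x} = A1 := by
        by_contra hne1
        exact hstrong1 _ hS1 hne1 h1w
      have hS2A : {x | reach (lstep f B2) (proj B2 t') x} = A2 := by
        by_contra hne2
        exact hstrong2 _ hS2 hne2 h2w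
      have ht'A : t' ∈ A := by
        rw [hA]
        exact ⟨hS1A ▸ (Relation.ReflTransGen.refl : reach (lstep f B1) (proj B1 t') _),
          hS2A ▸ (Relation.ReflTransGen.refl : reach (lstep f B2) (proj B2 t') _)⟩
      exact hne (attr_eq_of_mem hA' hAttr ht' ht'A)
end
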